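/- For real a and x ≥ 0, ∫₀ˣ (e^{−t}/√t) cosh(a√t) dt = (√π/2) e^{a²/4} [erf(a/2 + √x) − erf(a/2 − √x)]. -/

import Mathlib

/-!
Substituting `t = s²` turns the integral into `∫₀^{√x} 2 e^{-s²} cosh(a s) ds`, and completing the
square, `2 e^{-s²} cosh(a s) = e^{a²/4} (e^{-(s + a/2)²} + e^{-(s - a/2)²})`, leaves two shifted
Gaussian integrals, each a difference of values of `erf`.
-/

open MeasureTheory Real

open Set intervalIntegral

/-- The error function `erf(x) = (2/√π) ∫₀ˣ e^{−t²} dt`. -/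
noncomputable def erf (x : ℝ) : ℝ :=
  (2 / Real.sqrt Real.pi) * ∫ t in (0:ℝ)..x, Real.exp (-t ^ 2)

theorem image_sq_Ioc_zero {c : ℝ} (hc : 0 ≤ c) :
    (fun s : ℝ => s ^ 2) '' Ioc 0 c = Ioc 0 (c ^ 2) := by
  ext y
  constructor
  · rintro ⟨s, ⟨hs0, hsc⟩, rfl⟩
    exact ⟨by positivity, pow_le_pow_left₀ hs0.le hsc 2⟩
  · rintro ⟨hy0, hyc⟩
    refine ⟨√y, ⟨sqrt_pos.2 hy0, ?_⟩, sq_sqrt hy0.le⟩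
    simpa [sqrt_sq hc] using sqrt_le_sqrt hyc

/-- For `x < 0` both sides vanish: `√t = 0` on `[x, 0]` and `f 0 / 0 = 0`. -/
theorem integral_comp_sqrt_div_sqrt (f : ℝ → ℝ) (x : ℝ) :
    ∫ t in (0:ℝ)..x, f (√t) / √t = 2 * ∫ s in (0:ℝ)..√x, f s := by
  rcases le_or_gt 0 x with hx | hx
  · have hsub := integral_image_eq_integral_abs_deriv_smul measurableSet_Ioc
      (fun s _ => (hasDerivAt_pow 2 s).hasDerivWithinAt)
      ((pow_left_strictMonoOn₀ two_ne_zero).injOn.mono fun _ hs => hs.1.le)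
      (fun t => f (√t) / √t) (s := Ioc 0 √x)
    rw [image_sq_Ioc_zero (sqrt_nonneg x), sq_sqrt hx] at hsub
    rw [integral_of_le hx, integral_of_le (sqrt_nonneg x), hsub, ← MeasureTheory.integral_const_mul]
    refine setIntegral_congr_fun measurableSet_Ioc fun s hs => ?_
    have hs0 : 0 < s := hs.1
    simp only [Nat.cast_ofNat, Nat.add_one_sub_one, pow_one, abs_mul, Nat.abs_ofNat,
      abs_of_pos hs0, sqrt_sq hs0.le, smul_eq_mul]
    field_simp
  · rw [sqrt_eq_zero'.2 hx.le, integral_same, mul_zero]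
    refine (integral_congr fun t ht => ?_).trans integral_zero
    rw [uIcc_of_ge hx.le] at ht
    simp [sqrt_eq_zero'.2 ht.2]

theorem erf_neg (x : ℝ) : erf (-x) = -erf x := by
  have h := integral_comp_neg (a := 0) (b := x) fun t : ℝ => exp (-t ^ 2)
  simp only [neg_sq, neg_zero] at h
  rw [erf, erf, integral_symm, ← h, mul_neg]

theorem integral_exp_neg_sq (p q : ℝ) :
    ∫ t in p..q, exp (-t ^ 2) = √π / 2 * (erf q - erf p) := by
  have hint : ∀ r, IntervalIntegrable (fun t : ℝ => exp (-t ^ 2)) volume 0 r :=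
    fun r => (by fun_prop : Continuous fun t : ℝ => exp (-t ^ 2)).intervalIntegrable 0 r
  rw [← integral_interval_sub_left (hint q) (hint p), erf, erf]
  field_simp [sqrt_ne_zero'.2 pi_pos]

theorem integral_exp_neg_add_sq (b c : ℝ) :
    ∫ s in (0:ℝ)..c, exp (-(s + b) ^ 2) = √π / 2 * (erf (c + b) - erf b) := by
  rw [integral_comp_add_right (fun u => exp (-u ^ 2)) b, zero_add, integral_exp_neg_sq]

theorem exp_neg_sq_mul_cosh (a s : ℝ) :
    exp (-s ^ 2) * cosh (a * s)
      = exp (a ^ 2 / 4) / 2 * (exp (-(s + a / 2) ^ 2) + exp (-(s + -(a / 2)) ^ 2)) := by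
  rw [cosh_eq, show -(s + a / 2) ^ 2 = -s ^ 2 + -(a * s) + -(a ^ 2 / 4) by ring,
    show -(s + -(a / 2)) ^ 2 = -s ^ 2 + a * s + -(a ^ 2 / 4) by ring]
  simp only [exp_add, exp_neg]
  field_simp
  ring

theorem integral_exp_neg_sq_mul_cosh (a c : ℝ) :
    ∫ s in (0:ℝ)..c, exp (-s ^ 2) * cosh (a * s)
      = √π / 4 * exp (a ^ 2 / 4) * (erf (a / 2 + c) - erf (a / 2 - c)) := by
  have hint : ∀ b : ℝ, IntervalIntegrable (fun s => exp (-(s + b) ^ 2)) volume 0 c :=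
    fun b => (by fun_prop : Continuous fun s : ℝ => exp (-(s + b) ^ 2)).intervalIntegrable 0 c
  simp_rw [exp_neg_sq_mul_cosh a, intervalIntegral.integral_const_mul]
  rw [integral_add (hint _) (hint _), integral_exp_neg_add_sq, integral_exp_neg_add_sq,
    show c + -(a / 2) = -(a / 2 - c) by ring, erf_neg, erf_neg, add_comm c]
  ring

theorem integral_cosh_sqrt_general (a x : ℝ) :
    ∫ t in (0:ℝ)..x, Real.exp (-t) / Real.sqrt t * Real.cosh (a * Real.sqrt t)
      = Real.sqrt Real.pi / 2 * Real.exp (a ^ 2 / 4)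
          * (erf (a / 2 + Real.sqrt x) - erf (a / 2 - Real.sqrt x)) := by
  have hintegrand : ∀ t : ℝ, exp (-t) / √t * cosh (a * √t)
      = exp (-(√t) ^ 2) * cosh (a * √t) / √t := by
    intro t
    rcases le_or_gt 0 t with ht | ht
    · rw [sq_sqrt ht, div_mul_eq_mul_div]
    · simp [sqrt_eq_zero'.2 ht.le]
  simp_rw [hintegrand]
  rw [integral_comp_sqrt_div_sqrt (fun s => exp (-s ^ 2) * cosh (a * s)),
    integral_exp_neg_sq_mul_cosh]
  ring

/-- `∫₀ˣ (e^{−t}/√t) cosh(a√t) dt = (√π/2) e^{a²/4} [erf(a/2+√x) − erf(a/2−√x)]`. -/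
theorem integral_cosh_sqrt (a x : ℝ) (hx : 0 ≤ x) :
    ∫ t in (0:ℝ)..x, Real.exp (-t) / Real.sqrt t * Real.cosh (a * Real.sqrt t)
      = Real.sqrt Real.pi / 2 * Real.exp (a ^ 2 / 4)
          * (erf (a / 2 + Real.sqrt x) - erf (a / 2 - Real.sqrt x)) :=
  integral_cosh_sqrt_general a x
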